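/- Let g = x + g₂x² + g₃x³ + ⋯ ∈ J(ℤ) be such that 4 ∣ g_k for every k ≥ 2. Then g admits an iterative square root: there exists ω ∈ J(ℤ) with ω ∘ ω = g (and moreover one may take all coefficients ω_k, k ≥ 2, even). -/

import Mathlib

open PowerSeries Finset

/-!
Build the square root one coefficient at a time. If `f ∈ J(ℤ)` satisfies `f ∘ f ≡ g` below
degree `N ≥ 2`, then `f + c X^N` still does, and the coefficient of `X^N` in its
self-composition grows by exactly `2c`: once through the linear term of the outer series, once
through the new term of the outer series applied to the leading `X` of the inner one. So the
defect at degree `N` can be removed whenever it is even.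

Evenness is kept by the invariant `f ≡ X (mod 2)`. It gives `f^j ≡ X^j (mod 2)`, so the
coefficient of `X^N` in `f ∘ f` is `2 f_N` plus products of two even numbers, hence divisible by
4; with `4 ∣ g_N` the correction `c` is even and the invariant survives. The approximations
stabilise coefficientwise, and their limit is the square root.
-/

/-- Composition `f ∘ g` of formal power series (substitution of `g` into `f`).
This coefficientwise formula agrees with the usual substitution whenever the
constant coefficient of `g` is zero, since then `g ^ j` has order at least `j`. -/
noncomputable def psComp {Z : Type*} [CommRing Z] (f g : Z⟦X⟧) : Z⟦X⟧ :=
  PowerSeries.mk fun n => ∑ j ∈ Finset.range (n + 1), coeff j f * coeff n (g ^ j)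

/-- The `m`-th compositional iterate: `ω^[0] = X` and `ω^[m+1] = ω ∘ ω^[m]`. -/
noncomputable def psIter {Z : Type*} [CommRing Z] (ω : Z⟦X⟧) : ℕ → Z⟦X⟧
  | 0 => PowerSeries.X
  | m + 1 => psComp ω (psIter ω m)

theorem mul_dvd_pow_sub_pow {R : Type*} [CommRing R] {x d a b : R} (ha : x ∣ a) (hb : x ∣ b)
    (hab : d ∣ a - b) {j : ℕ} (hj : 2 ≤ j) : d * x ∣ a ^ j - b ^ j := by
  obtain ⟨k, rfl⟩ : ∃ k, j = k + 2 := ⟨j - 2, by omega⟩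
  have hsplit : a ^ (k + 2) - b ^ (k + 2) =
      (a - b) * a ^ (k + 1) + (a ^ (k + 1) - b ^ (k + 1)) * b := by
    ring
  rw [hsplit]
  exact dvd_add (mul_dvd_mul hab (dvd_pow ha k.succ_ne_zero))
    (mul_dvd_mul (hab.trans (sub_dvd_pow_sub_pow a b _)) hb)

namespace PowerSeries

variable {R : Type*} [CommRing R]

theorem coeff_eq_of_X_pow_dvd_sub {f h : R⟦X⟧} {m n : ℕ} (hd : X ^ m ∣ f - h) (hn : n < m) :
    coeff n f = coeff n h :=
  sub_eq_zero.1 (by simpa using X_pow_dvd_iff.1 hd n hn)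

theorem coeff_pow_self_eq_coeff_one_pow {f : R⟦X⟧} (hf : constantCoeff f = 0) (n : ℕ) :
    coeff n (f ^ n) = coeff 1 f ^ n := by
  obtain ⟨u, rfl⟩ := X_dvd_iff.2 hf
  simpa [mul_pow, coeff_zero_eq_constantCoeff] using coeff_X_pow_mul (u ^ n) n 0

theorem psComp_X_left {f : R⟦X⟧} (hf : constantCoeff f = 0) : psComp X f = f := by
  ext n
  rw [psComp, coeff_mk]
  rcases n with _ | n
  · simp [coeff_zero_eq_constantCoeff, hf]
  · rw [sum_eq_single 1 (fun j _ hj => by rw [coeff_X, if_neg hj, zero_mul]) (by simp)]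
    simp

theorem coeff_psComp_congr {f f' h h' : R⟦X⟧} {n : ℕ} (hf : X ^ (n + 1) ∣ f - f')
    (hh : X ^ (n + 1) ∣ h - h') : coeff n (psComp f h) = coeff n (psComp f' h') := by
  simp only [psComp, coeff_mk]
  refine sum_congr rfl fun j hj => ?_
  rw [coeff_eq_of_X_pow_dvd_sub hf (mem_range.1 hj),
    coeff_eq_of_X_pow_dvd_sub (hh.trans (sub_dvd_pow_sub_pow h h' j)) n.lt_succ_self]

theorem coeff_psComp_add_C_mul_X_pow_self {f : R⟦X⟧} (hf0 : constantCoeff f = 0)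
    (hf1 : coeff 1 f = 1) {N : ℕ} (hN : 2 ≤ N) (c : R) :
    coeff N (psComp (f + C c * X ^ N) (f + C c * X ^ N)) = coeff N (psComp f f) + 2 * c := by
  set a := f + C c * X ^ N with ha
  have ha0 : constantCoeff a = 0 := by
    rw [ha, map_add, map_mul, map_pow, constantCoeff_X, zero_pow (by omega), mul_zero, add_zero,
      hf0]
  have hcoeff : ∀ j, coeff j a = coeff j f + if j = N then c else 0 := by
    intro j; simp [ha]
  have hpow : ∀ j, coeff N (a ^ j) = coeff N (f ^ j) + if j = 1 then c else 0 := by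
    intro j
    rcases lt_or_ge j 2 with hj | hj
    · interval_cases j <;> simp [hcoeff]
    · have hX : X ^ N * X ∣ a ^ j - f ^ j :=
        mul_dvd_pow_sub_pow (X_dvd_iff.2 ha0) (X_dvd_iff.2 hf0) (by simp [ha]) hj
      rw [← pow_succ] at hX
      rw [coeff_eq_of_X_pow_dvd_sub hX N.lt_succ_self, if_neg (by omega), add_zero]
  have hNN : coeff N (a ^ N) = 1 := by
    rw [coeff_pow_self_eq_coeff_one_pow ha0, hcoeff, if_neg (by omega), add_zero, hf1, one_pow]
  have hmem : ∀ {k}, k ≤ N → k ∈ range (N + 1) := fun hk => mem_range.2 (by omega)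
  calc coeff N (psComp a a)
      = ∑ j ∈ range (N + 1), coeff j f * coeff N (a ^ j) + c * coeff N (a ^ N) := by
        simp only [psComp, coeff_mk, hcoeff, add_mul, sum_add_distrib, ite_mul, zero_mul,
          sum_ite_eq', if_pos (hmem le_rfl)]
    _ = coeff N (psComp f f) + c + c := by
        rw [hNN, mul_one]
        simp only [psComp, coeff_mk, hpow, mul_add, sum_add_distrib, mul_ite, mul_zero,
          sum_ite_eq', if_pos (hmem (by omega : 1 ≤ N)), hf1, one_mul]
    _ = coeff N (psComp f f) + 2 * c := by ring

end PowerSeries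

theorem two_dvd_coeff_pow_of_ne {f : ℤ⟦X⟧} (hf0 : constantCoeff f = 0) (hf1 : coeff 1 f = 1)
    (hfeven : ∀ k, 2 ≤ k → 2 ∣ coeff k f) {j n : ℕ} (hnj : n ≠ j) : 2 ∣ coeff n (f ^ j) := by
  have hmod : map (Int.castRingHom (ZMod 2)) f = X := by
    ext k
    rw [coeff_map, coeff_X]
    rcases k with _ | _ | k
    · simp [coeff_zero_eq_constantCoeff, hf0]
    · simp [hf1]
    · simpa [ZMod.intCast_zmod_eq_zero_iff_dvd] using hfeven (k + 2) (by omega)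
  have hcast : ((coeff n (f ^ j) : ℤ) : ZMod 2) = 0 := by
    rw [← eq_intCast (Int.castRingHom _), ← coeff_map, map_pow, hmod, coeff_X_pow, if_neg hnj]
  exact_mod_cast (ZMod.intCast_zmod_eq_zero_iff_dvd _ 2).1 hcast

theorem four_dvd_coeff_psComp_self {f : ℤ⟦X⟧} (hf0 : constantCoeff f = 0) (hf1 : coeff 1 f = 1)
    (hfeven : ∀ k, 2 ≤ k → 2 ∣ coeff k f) {N : ℕ} (hN : 2 ≤ N) :
    4 ∣ coeff N (psComp f f) := by
  -- The terms `j = 1` and `j = N` both equal `f_N`; every other term is a product of two evens.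
  have hterm : ∀ j ∈ range (N + 1), 4 ∣ coeff j f * coeff N (f ^ j) -
      ((if j = 1 then coeff N f else 0) + if j = N then coeff N f else 0) := by
    intro j hj
    rw [mem_range] at hj
    rcases Nat.lt_or_ge j 2 with hj2 | hj2
    · have hN0 : 0 ≠ N := by omega
      have hN1 : 1 ≠ N := by omega
      interval_cases j <;> simp [coeff_zero_eq_constantCoeff, hf0, hf1, hN0, hN1]
    · rcases eq_or_ne j N with rfl | hjN
      · simp [coeff_pow_self_eq_coeff_one_pow hf0, hf1, show j ≠ 1 by omega]
      · simpa [show j ≠ 1 by omega, hjN] using mul_dvd_mul (hfeven j hj2)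
          (two_dvd_coeff_pow_of_ne hf0 hf1 hfeven (Ne.symm hjN))
  have hsum := dvd_sum hterm
  rw [sum_sub_distrib, sum_add_distrib, sum_ite_eq', sum_ite_eq', if_pos (mem_range.2 (by omega)),
    if_pos (mem_range.2 (by omega))] at hsum
  have hfN := hfeven N hN
  simp only [psComp, coeff_mk]
  omega

noncomputable def iterSqrtStep (g f : ℤ⟦X⟧) (N : ℕ) : ℤ⟦X⟧ :=
  f + C ((coeff N g - coeff N (psComp f f)) / 2) * X ^ N

theorem X_pow_dvd_iterSqrtStep_sub (g f : ℤ⟦X⟧) (N : ℕ) : X ^ N ∣ iterSqrtStep g f N - f := by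
  rw [iterSqrtStep, add_sub_cancel_left]
  exact dvd_mul_left _ _

theorem coeff_psComp_iterSqrtStep {g f : ℤ⟦X⟧} (hf0 : constantCoeff f = 0) (hf1 : coeff 1 f = 1)
    {N : ℕ} (hN : 2 ≤ N) (hdvd : 2 ∣ coeff N g - coeff N (psComp f f)) :
    coeff N (psComp (iterSqrtStep g f N) (iterSqrtStep g f N)) = coeff N g := by
  rw [iterSqrtStep, coeff_psComp_add_C_mul_X_pow_self hf0 hf1 hN, Int.mul_ediv_cancel' hdvd]
  ring

theorem two_dvd_coeff_iterSqrtStep {g f : ℤ⟦X⟧} (hf0 : constantCoeff f = 0)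
    (hf1 : coeff 1 f = 1) (hfeven : ∀ k, 2 ≤ k → 2 ∣ coeff k f) {N : ℕ} (hN : 2 ≤ N)
    (hgN : 4 ∣ coeff N g) {k : ℕ} (hk : 2 ≤ k) : 2 ∣ coeff k (iterSqrtStep g f N) := by
  have h4 := four_dvd_coeff_psComp_self hf0 hf1 hfeven hN
  have hfk := hfeven k hk
  rw [iterSqrtStep, map_add, coeff_C_mul_X_pow]
  split_ifs <;> omega

noncomputable def iterSqrtApprox (g : ℤ⟦X⟧) : ℕ → ℤ⟦X⟧
  | 0 => X
  | n + 1 => iterSqrtStep g (iterSqrtApprox g n) (n + 2)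

theorem X_pow_dvd_iterSqrtApprox_sub (g : ℤ⟦X⟧) {m n : ℕ} (hmn : m ≤ n) :
    X ^ (m + 2) ∣ iterSqrtApprox g n - iterSqrtApprox g m := by
  induction n, hmn using Nat.le_induction with
  | base => simp
  | succ n hmn ih =>
    rw [← sub_add_sub_cancel _ (iterSqrtApprox g n)]
    exact dvd_add ((pow_dvd_pow X (by omega)).trans (X_pow_dvd_iterSqrtStep_sub _ _ _)) ih

theorem coeff_iterSqrtApprox_of_lt_two (g : ℤ⟦X⟧) (n : ℕ) {k : ℕ} (hk : k < 2) :
    coeff k (iterSqrtApprox g n) = coeff k X :=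
  coeff_eq_of_X_pow_dvd_sub (X_pow_dvd_iterSqrtApprox_sub g n.zero_le) hk

theorem constantCoeff_iterSqrtApprox (g : ℤ⟦X⟧) (n : ℕ) :
    constantCoeff (iterSqrtApprox g n) = 0 := by
  simpa using coeff_iterSqrtApprox_of_lt_two g n zero_lt_two

theorem coeff_one_iterSqrtApprox (g : ℤ⟦X⟧) (n : ℕ) : coeff 1 (iterSqrtApprox g n) = 1 := by
  simpa using coeff_iterSqrtApprox_of_lt_two g n one_lt_two

theorem two_dvd_coeff_iterSqrtApprox {g : ℤ⟦X⟧} (hdiv : ∀ k, 2 ≤ k → 4 ∣ coeff k g) (n : ℕ) :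
    ∀ k, 2 ≤ k → 2 ∣ coeff k (iterSqrtApprox g n) := by
  induction n with
  | zero => intro k hk; simp [iterSqrtApprox, coeff_X, show k ≠ 1 by omega]
  | succ n ih =>
    exact fun k hk => two_dvd_coeff_iterSqrtStep (constantCoeff_iterSqrtApprox g n)
      (coeff_one_iterSqrtApprox g n) ih (by omega) (hdiv _ (by omega)) hk

theorem coeff_psComp_iterSqrtApprox {g : ℤ⟦X⟧} (hg0 : constantCoeff g = 0) (hg1 : coeff 1 g = 1)
    (hdiv : ∀ k, 2 ≤ k → 4 ∣ coeff k g) (n : ℕ) :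
    ∀ k ≤ n + 1, coeff k (psComp (iterSqrtApprox g n) (iterSqrtApprox g n)) = coeff k g := by
  induction n with
  | zero =>
    intro k hk
    interval_cases k <;>
      simp [iterSqrtApprox, psComp_X_left, coeff_zero_eq_constantCoeff, hg0, hg1]
  | succ n ih =>
    intro k hk
    rw [iterSqrtApprox]
    rcases Nat.lt_or_ge k (n + 2) with hk' | hk'
    · have hX := X_pow_dvd_iterSqrtStep_sub g (iterSqrtApprox g n) (n + 2)
      rw [coeff_psComp_congr ((pow_dvd_pow X hk').trans hX) ((pow_dvd_pow X hk').trans hX),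
        ih k (by omega)]
    · obtain rfl : k = n + 2 := by omega
      have hN : 2 ≤ n + 2 := by omega
      have hf0 := constantCoeff_iterSqrtApprox g n
      have hf1 := coeff_one_iterSqrtApprox g n
      have h4 := four_dvd_coeff_psComp_self hf0 hf1 (two_dvd_coeff_iterSqrtApprox hdiv n) hN
      have hgN := hdiv (n + 2) hN
      exact coeff_psComp_iterSqrtStep hf0 hf1 hN (by omega)

noncomputable def iterSqrt (g : ℤ⟦X⟧) : ℤ⟦X⟧ :=
  mk fun k => coeff k (iterSqrtApprox g k)

theorem X_pow_dvd_iterSqrt_sub (g : ℤ⟦X⟧) (n : ℕ) :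
    X ^ (n + 1) ∣ iterSqrt g - iterSqrtApprox g n := by
  refine X_pow_dvd_iff.2 fun k hk => ?_
  rw [map_sub, iterSqrt, coeff_mk, sub_eq_zero]
  exact (coeff_eq_of_X_pow_dvd_sub (X_pow_dvd_iterSqrtApprox_sub g (by omega)) (by omega)).symm

/-- if every coefficient `g_k`, `k ≥ 2`, of `g ∈ 𝒥(ℤ)` is divisible by 4,
then `g` has an iterative square root `ω ∈ 𝒥(ℤ)`, which can moreover be chosen with all
coefficients `ω_k`, `k ≥ 2`, even. -/
theorem square_root_of_divisible_by_four (g : ℤ⟦X⟧)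
    (hg0 : constantCoeff g = 0) (hg1 : coeff 1 g = 1)
    (hdiv : ∀ k : ℕ, 2 ≤ k → 4 ∣ coeff k g) :
    ∃ ω : ℤ⟦X⟧, (constantCoeff ω = 0 ∧ coeff 1 ω = 1) ∧
      psComp ω ω = g ∧ ∀ k : ℕ, 2 ≤ k → 2 ∣ coeff k ω := by
  refine ⟨iterSqrt g, ⟨?_, ?_⟩, ?_, fun k hk => ?_⟩
  · simpa [iterSqrt, coeff_zero_eq_constantCoeff] using constantCoeff_iterSqrtApprox g 0
  · simpa [iterSqrt] using coeff_one_iterSqrtApprox g 1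
  · ext n
    have hX := X_pow_dvd_iterSqrt_sub g n
    rw [coeff_psComp_congr hX hX, coeff_psComp_iterSqrtApprox hg0 hg1 hdiv n n n.le_succ]
  · simpa [iterSqrt] using two_dvd_coeff_iterSqrtApprox hdiv k k hk
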